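/- arXiv:1502.07859 — 16 statements merged into one kernel-verified Lean document; each statement's English description precedes it below -/
import Mathlib

section
/- If f is superquadratic on [0,∞) and f ≥ 0, then f is convex and f(0) = 0. -/
theorem superquadratic_nonneg_convex (f : ℝ → ℝ)
    (hf : ∀ x ≥ (0:ℝ), ∃ C : ℝ, ∀ y ≥ (0:ℝ), f y - f x ≥ f |y - x| + C * (y - x))
    (hpos : ∀ x ≥ (0:ℝ), 0 ≤ f x) :
    ConvexOn ℝ (Set.Ici (0:ℝ)) f ∧ f 0 = 0 := by
  constructor
  · refine ⟨convex_Ici 0, ?_⟩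
    intro x hx y hy a b ha hb hab
    simp only [smul_eq_mul]
    set z := a * x + b * y with hzdef
    have hz : (0:ℝ) ≤ z := by
      have : a * x + b * y ∈ Set.Ici (0:ℝ) := (convex_Ici 0) hx hy ha hb hab
      simpa using this
    obtain ⟨C, hC⟩ := hf z hz
    have h1 := hC x hx
    have h2 := hC y hy
    have hfx := hpos |x - z| (abs_nonneg _)
    have hfy := hpos |y - z| (abs_nonneg _)
    have k1 := mul_le_mul_of_nonneg_left h1 ha
    have k2 := mul_le_mul_of_nonneg_left h2 hb
    have e : a * (C * (x - z)) + b * (C * (y - z)) = 0 := by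
      rw [hzdef]; linear_combination (-(C * (a * x + b * y))) * hab
    have e2 : a * f z + b * f z = f z := by linear_combination (f z) * hab
    nlinarith [mul_nonneg ha hfx, mul_nonneg hb hfy]
  · obtain ⟨C, hC⟩ := hf 0 le_rfl
    have h := hC 0 le_rfl
    simp at h
    have := hpos 0 le_rfl
    linarith
end

section
/- The function f(x) = x^p for p ≥ 2 is superquadratic on [0,∞), with witness C(x) = p·x^(p-1). -/
/-!
Both sides of the inequality vanish at `y = x`. Moving `y` away from `x`, the derivative in `y` of
`y ^ p - x ^ p - p x ^ (p - 1) (y - x) - |y - x| ^ p` has the sign of `y - x`, because the derivative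
`t ↦ p t ^ (p - 1)` of `t ↦ t ^ p` is superadditive on `[0, ∞)` when `p - 1 ≥ 1`. This works for any
`f` with `f 0 ≤ 0` whose derivative is superadditive.
-/

open Set

def IsSuperquadraticWith (f C : ℝ → ℝ) : Prop :=
  ∀ x ≥ (0 : ℝ), ∀ y ≥ (0 : ℝ), f y - f x ≥ f |y - x| + C x * (y - x)

section SuperadditiveDeriv

variable {f f' : ℝ → ℝ}

lemma sub_ge_of_superadditive_deriv_of_le (hf : ∀ t ≥ 0, HasDerivAt f (f' t) t) (hf0 : f 0 ≤ 0)
    (hf' : ∀ a ≥ 0, ∀ b ≥ 0, f' a + f' b ≤ f' (a + b)) {x y : ℝ} (hx : 0 ≤ x) (hxy : x ≤ y) :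
    f y - f x ≥ f (y - x) + f' x * (y - x) := by
  set g : ℝ → ℝ := fun t ↦ f t - f (t - x) - f' x * t
  have hg : ∀ t ≥ x, HasDerivAt g (f' t - f' (t - x) - f' x) t := fun t ht ↦ by
    have hshift := (hf (t - x) (sub_nonneg.2 ht)).comp_sub_const t x
    exact (((hf t (hx.trans ht)).sub hshift).sub ((hasDerivAt_id t).const_mul (f' x))).congr_deriv
      (by ring)
  have hmono : MonotoneOn g (Ici x) := by
    refine monotoneOn_of_hasDerivWithinAt_nonneg (convex_Ici x)
      (fun t ht ↦ (hg t ht).continuousAt.continuousWithinAt)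
      (fun t ht ↦ (hg t (interior_subset ht)).hasDerivWithinAt) fun t ht ↦ ?_
    rw [interior_Ici, mem_Ioi] at ht
    have := hf' x hx (t - x) (by linarith)
    rw [add_sub_cancel] at this
    linarith
  have := hmono self_mem_Ici hxy hxy
  simp only [g, sub_self] at this
  linarith

lemma sub_ge_of_superadditive_deriv_of_ge (hf : ∀ t ≥ 0, HasDerivAt f (f' t) t) (hf0 : f 0 ≤ 0)
    (hf' : ∀ a ≥ 0, ∀ b ≥ 0, f' a + f' b ≤ f' (a + b)) {x y : ℝ} (hy : 0 ≤ y) (hyx : y ≤ x) :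
    f y - f x ≥ f (x - y) + f' x * (y - x) := by
  set g : ℝ → ℝ := fun t ↦ f t - f (x - t) - f' x * t
  have hg : ∀ t ∈ Icc 0 x, HasDerivAt g (f' t + f' (x - t) - f' x) t := fun t ht ↦ by
    have hrefl := (hf (x - t) (sub_nonneg.2 ht.2)).comp_const_sub x t
    exact (((hf t ht.1).sub hrefl).sub ((hasDerivAt_id t).const_mul (f' x))).congr_deriv
      (by ring)
  have hanti : AntitoneOn g (Icc 0 x) := by
    refine antitoneOn_of_hasDerivWithinAt_nonpos (convex_Icc 0 x)
      (fun t ht ↦ (hg t ht).continuousAt.continuousWithinAt)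
      (fun t ht ↦ (hg t (interior_subset ht)).hasDerivWithinAt) fun t ht ↦ ?_
    rw [interior_Icc, mem_Ioo] at ht
    have := hf' t ht.1.le (x - t) (by linarith)
    rw [add_sub_cancel] at this
    linarith
  have := hanti ⟨hy, hyx⟩ ⟨hy.trans hyx, le_rfl⟩ hyx
  simp only [g, sub_self] at this
  linarith

theorem isSuperquadraticWith_deriv_of_superadditive (hf : ∀ t ≥ 0, HasDerivAt f (f' t) t)
    (hf0 : f 0 ≤ 0) (hf' : ∀ a ≥ 0, ∀ b ≥ 0, f' a + f' b ≤ f' (a + b)) :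
    IsSuperquadraticWith f f' := by
  intro x hx y hy
  rcases le_total x y with hxy | hyx
  · rw [abs_of_nonneg (sub_nonneg.2 hxy)]
    exact sub_ge_of_superadditive_deriv_of_le hf hf0 hf' hx hxy
  · rw [abs_of_nonpos (sub_nonpos.2 hyx), neg_sub]
    exact sub_ge_of_superadditive_deriv_of_ge hf hf0 hf' hy hyx

end SuperadditiveDeriv

lemma Real.isSuperquadraticWith_rpow {p : ℝ} (hp : 2 ≤ p) :
    IsSuperquadraticWith (fun t ↦ t ^ p) (fun t ↦ p * t ^ (p - 1)) := by
  refine isSuperquadraticWith_deriv_of_superadditive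
    (fun t _ ↦ Real.hasDerivAt_rpow_const (Or.inr (by linarith)))
    (by simp [Real.zero_rpow (by linarith : p ≠ 0)]) fun a ha b hb ↦ ?_
  rw [← mul_add]
  exact mul_le_mul_of_nonneg_left (Real.add_rpow_le_rpow_add ha hb (by linarith)) (by linarith)

theorem rpow_superquadratic (p : ℝ) (hp : 2 ≤ p) :
    ∀ x ≥ (0:ℝ), ∀ y ≥ (0:ℝ),
      y ^ p - x ^ p ≥ |y - x| ^ p + (p * x ^ (p - 1)) * (y - x) :=
  Real.isSuperquadraticWith_rpow hp
end

section
/- The function h(x) = x² log x (with h(0)=0) is superquadratic on [0,∞), with witness C(x) = x(2 log x + 1). -/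
theorem sq_mul_log_superquadratic :
    ∀ x ≥ (0:ℝ), ∀ y ≥ (0:ℝ),
      y ^ 2 * Real.log y - x ^ 2 * Real.log x ≥
        |y - x| ^ 2 * Real.log |y - x| + (x * (2 * Real.log x + 1)) * (y - x) := by
  intro x hx y hy
  rcases le_or_gt x y with hxy | hxy
  · rw [abs_of_nonneg (by linarith : (0:ℝ) ≤ y - x)]
    rcases eq_or_lt_of_le hx with hx0 | hx0
    · simp [← hx0]
    rcases eq_or_lt_of_le hxy with hyx | hyx
    · simp [← hyx, Real.log_zero]
    have hy0 : 0 < y := lt_of_le_of_lt hx hyx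
    -- log x - log y ≤ x/y - 1
    have hlog := Real.log_le_sub_one_of_pos (show (0:ℝ) < x / y by positivity)
    rw [Real.log_div (ne_of_gt hx0) (ne_of_gt hy0)] at hlog
    have hdiv : y * (x / y - 1) = x - y := by field_simp
    have h1 : y * (Real.log y - Real.log x) - (y - x) ≥ 0 := by
      nlinarith [mul_le_mul_of_nonneg_left hlog (le_of_lt hy0)]
    have h2 : Real.log (y - x) ≤ Real.log y :=
      Real.log_le_log (by linarith) (by linarith)
    nlinarith [mul_nonneg (mul_nonneg (le_of_lt hx0) (show (0:ℝ) ≤ 2*y - x by linarith)) h1,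
      mul_nonneg (sq_nonneg (y - x)) (sub_nonneg.mpr h2),
      mul_nonneg (le_of_lt hx0) (sq_nonneg (y - x)), hy0]
  · rw [abs_of_neg (by linarith : y - x < 0), neg_sub]
    have hx0 : 0 < x := lt_of_le_of_lt hy hxy
    have hv0 : 0 < x - y := by linarith
    rcases eq_or_lt_of_le hy with hy0 | hy0
    · rw [← hy0]
      simp only [Real.log_zero, zero_sub, neg_neg, sub_zero]
      nlinarith [sq_nonneg x]
    have hlog := Real.log_le_sub_one_of_pos (show (0:ℝ) < x / y by positivity)
    rw [Real.log_div (ne_of_gt hx0) (ne_of_gt hy0)] at hlog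
    have hdiv : y * (x / y - 1) = x - y := by field_simp
    have h1 : y * (Real.log x - Real.log y) - (x - y) ≤ 0 := by
      nlinarith [mul_le_mul_of_nonneg_left hlog (le_of_lt hy0)]
    have h2 : Real.log (x - y) ≤ Real.log x :=
      Real.log_le_log hv0 (by linarith)
    nlinarith [mul_nonpos_of_nonneg_of_nonpos (le_of_lt hy0) h1,
      mul_nonpos_of_nonneg_of_nonpos (le_of_lt hv0) h1,
      mul_nonneg (sq_nonneg (x - y)) (sub_nonneg.mpr h2),
      sq_nonneg (x - y)]
end

section
/- The function g(x) = -(1 + x^(1/p))^p for p > 0 is superquadratic on [0,∞), with witness C(x) = 0, i.e., g(y) - g(x) ≥ g(|y - x|) for all x, y ≥ 0. -/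
/-!
Write `f t = (1 + t ^ (1/p)) ^ p`, so that the claim is `f y ≤ f x + f |y - x|`. The ratio
`f t / t = (1 + t ^ (-1/p)) ^ p` decreases in `t`, and any such function with `f 0 ≥ 0` is
subadditive: for `s = x + d` one has `s f s = x f s + d f s ≤ s f x + s f d`. This settles `x ≤ y`;
for `y ≤ x` it suffices that `f` is monotone and nonnegative.
-/

open Real

/-- The cross-multiplied form of "`f t / t` is antitone" avoids the junk value `f 0 / 0`. -/
theorem map_add_le_add_of_mul_le_mul {f : ℝ → ℝ} (hf0 : 0 ≤ f 0)
    (hf : ∀ x s, 0 ≤ x → x ≤ s → x * f s ≤ s * f x) {x d : ℝ} (hx : 0 ≤ x) (hd : 0 ≤ d) :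
    f (x + d) ≤ f x + f d := by
  rcases (add_nonneg hx hd).eq_or_lt with hs | hs
  · obtain ⟨rfl, rfl⟩ : x = 0 ∧ d = 0 := ⟨by linarith, by linarith⟩
    simpa using hf0
  have hxs := hf x (x + d) hx (by linarith)
  have hds := hf d (x + d) hd (by linarith)
  refine le_of_mul_le_mul_left ?_ hs
  linarith

variable {p : ℝ}

theorem mul_one_add_rpow_rpow_le (hp : 0 < p) {x s : ℝ} (hx : 0 ≤ x) (hxs : x ≤ s) :
    x * (1 + s ^ (1 / p)) ^ p ≤ s * (1 + x ^ (1 / p)) ^ p := by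
  have hs : 0 ≤ s := hx.trans hxs
  have hroot : x ^ (1 / p) ≤ s ^ (1 / p) := rpow_le_rpow hx hxs (by positivity)
  have hpow (t : ℝ) (ht : 0 ≤ t) : t = (t ^ (1 / p)) ^ p := by
    rw [← rpow_mul ht, one_div_mul_cancel hp.ne', rpow_one]
  -- with `q = 1 / p`, this is `(x^q (1 + s^q)) ^ p ≤ (s^q (1 + x^q)) ^ p`
  rw [hpow x hx, hpow s hs, ← mul_rpow (by positivity) (by positivity), ← hpow x hx,
    ← mul_rpow (by positivity) (by positivity), ← hpow s hs]
  refine rpow_le_rpow (by positivity) ?_ hp.le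
  nlinarith [rpow_nonneg hx (1 / p)]

theorem one_add_rpow_rpow_add_le (hp : 0 < p) {x d : ℝ} (hx : 0 ≤ x) (hd : 0 ≤ d) :
    (1 + (x + d) ^ (1 / p)) ^ p ≤ (1 + x ^ (1 / p)) ^ p + (1 + d ^ (1 / p)) ^ p :=
  map_add_le_add_of_mul_le_mul (f := fun t ↦ (1 + t ^ (1 / p)) ^ p) (by positivity)
    (fun _ _ hx hxs ↦ mul_one_add_rpow_rpow_le hp hx hxs) hx hd

theorem one_add_rpow_rpow_le_of_le (hp : 0 < p) {x y : ℝ} (hy : 0 ≤ y) (hyx : y ≤ x) :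
    (1 + y ^ (1 / p)) ^ p ≤ (1 + x ^ (1 / p)) ^ p := by
  gcongr

theorem neg_one_add_rpow_superquadratic (p : ℝ) (hp : 0 < p) :
    ∀ x ≥ (0:ℝ), ∀ y ≥ (0:ℝ),
      (-(1 + y ^ (1 / p)) ^ p) - (-(1 + x ^ (1 / p)) ^ p) ≥
        -(1 + |y - x| ^ (1 / p)) ^ p := by
  intro x hx y hy
  rcases le_total x y with hxy | hyx
  · have hsub := one_add_rpow_rpow_add_le hp hx (sub_nonneg.mpr hxy)
    rw [add_sub_cancel] at hsub
    rw [abs_of_nonneg (sub_nonneg.mpr hxy)]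
    linarith
  · have hmono := one_add_rpow_rpow_le_of_le hp hy hyx
    have hnonneg : 0 ≤ (1 + |y - x| ^ (1 / p)) ^ p := by positivity
    linarith
end

section
/- If f is superquadratic on [0,∞), x_i ≥ 0 and p_i > 0 with ∑_{i=1}^n p_i = 1, then ∑ p_i f(x_i) - f(∑ p_j x_j) ≥ ∑ p_i f(|x_i - ∑ p_j x_j|). -/
theorem jensen_superquadratic (f : ℝ → ℝ)
    (hf : ∀ x ≥ (0:ℝ), ∃ C : ℝ, ∀ y ≥ (0:ℝ), f y - f x ≥ f |y - x| + C * (y - x))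
    (n : ℕ) (x p : Fin n → ℝ)
    (hx : ∀ i, 0 ≤ x i) (hp : ∀ i, 0 < p i) (hp1 : ∑ i, p i = 1) :
    ∑ i, p i * f (x i) - f (∑ i, p i * x i) ≥
      ∑ i, p i * f |x i - ∑ j, p j * x j| := by
  set m := ∑ j, p j * x j with hm
  have hm0 : 0 ≤ m := Finset.sum_nonneg fun i _ =>
    mul_nonneg (hp i).le (hx i)
  obtain ⟨C, hC⟩ := hf m hm0
  have key : ∀ i, p i * f (x i) - p i * f m ≥
      p i * f |x i - m| + C * (p i * (x i - m)) := by
    intro i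
    have := hC (x i) (hx i)
    have hpi := (hp i).le
    nlinarith [mul_le_mul_of_nonneg_left this hpi]
  have hsum := Finset.sum_le_sum fun i (_ : i ∈ Finset.univ) => key i
  have h1 : ∑ i, (p i * f m) = f m := by
    rw [← Finset.sum_mul, hp1, one_mul]
  have h2 : ∑ i, (p i * (x i - m)) = 0 := by
    simp only [mul_sub]
    rw [Finset.sum_sub_distrib, ← Finset.sum_mul, hp1, one_mul, hm]; ring
  calc ∑ i, p i * f |x i - m|
      = ∑ i, (p i * f |x i - m| + C * (p i * (x i - m))) := by
        rw [Finset.sum_add_distrib, ← Finset.mul_sum, h2, mul_zero, add_zero]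
    _ ≤ ∑ i, (p i * f (x i) - p i * f m) := hsum
    _ = ∑ i, p i * f (x i) - f m := by
        rw [Finset.sum_sub_distrib, h1]
end

section
/- Let f be superquadratic on [0,∞), x_i ≥ 0, p_i ∈ (0,1) with ∑_{i=1}^n p_i = 1, and λ ∈ [0,1]. Writing x̄ = ∑ p_j x_j, one has ∑ p_i f((1-λ)x̄ + λ x_i) - f(x̄) ≥ ∑ p_i f(λ|x_i - x̄|). -/
theorem jensen_superquadratic_lambda (f : ℝ → ℝ)
    (hf : ∀ x ≥ (0:ℝ), ∃ C : ℝ, ∀ y ≥ (0:ℝ), f y - f x ≥ f |y - x| + C * (y - x))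
    (n : ℕ) (x p : Fin n → ℝ)
    (hx : ∀ i, 0 ≤ x i) (hp : ∀ i, p i ∈ Set.Ioo (0:ℝ) 1) (hp1 : ∑ i, p i = 1)
    (lam : ℝ) (hlam : lam ∈ Set.Icc (0:ℝ) 1) :
    ∑ i, p i * f ((1 - lam) * (∑ j, p j * x j) + lam * x i) - f (∑ j, p j * x j) ≥
      ∑ i, p i * f (lam * |x i - ∑ j, p j * x j|) := by
  set m := ∑ j, p j * x j with hm
  have hm0 : 0 ≤ m := Finset.sum_nonneg fun i _ =>
    mul_nonneg (hp i).1.le (hx i)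
  obtain ⟨C, hC⟩ := hf m hm0
  have key : ∀ i, p i * f ((1 - lam) * m + lam * x i) - p i * f m ≥
      p i * f (lam * |x i - m|) + p i * (C * (lam * (x i - m))) := by
    intro i
    have hy0 : 0 ≤ (1 - lam) * m + lam * x i :=
      add_nonneg (mul_nonneg (by linarith [hlam.2]) hm0)
        (mul_nonneg hlam.1 (hx i))
    have h := hC _ hy0
    have habs : |(1 - lam) * m + lam * x i - m| = lam * |x i - m| := by
      rw [show (1 - lam) * m + lam * x i - m = lam * (x i - m) by ring,
        abs_mul, abs_of_nonneg hlam.1]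
    rw [habs] at h
    have hpi := (hp i).1.le
    nlinarith [mul_le_mul_of_nonneg_left h hpi]
  have hsum := Finset.sum_le_sum fun i (_ : i ∈ Finset.univ) => (key i)
  simp only [Finset.sum_sub_distrib, Finset.sum_add_distrib] at hsum
  have h1 : ∑ i, p i * f m = f m := by
    rw [← Finset.sum_mul, hp1, one_mul]
  have h2 : ∑ i, p i * (C * (lam * (x i - m))) = 0 := by
    have e1 : ∑ i, p i * (C * (lam * (x i - m))) = C * lam * (∑ i, p i * (x i - m)) := by
      rw [Finset.mul_sum]; congr 1; ext i; ring
    have e2 : ∑ i, p i * (x i - m) = 0 := by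
      simp only [mul_sub, Finset.sum_sub_distrib, ← Finset.sum_mul, hp1, one_mul, ← hm, sub_self]
    rw [e1, e2, mul_zero]
  rw [h1, h2, add_zero] at hsum
  linarith
end

section
/- Let f ≥ 0 be superquadratic on [0,∞), x_i ≥ 0, p_i ∈ (0,1) with ∑_{i=1}^n p_i = 1, and set x̄ = ∑ p_j x_j. Then the Jensen functional satisfies ∑ p_i f(x_i) - f(x̄) ≥ 2 ∑ p_i f(|x_i - x̄|/2). -/
theorem jensen_superquadratic_half (f : ℝ → ℝ)
    (hf : ∀ x ≥ (0:ℝ), ∃ C : ℝ, ∀ y ≥ (0:ℝ), f y - f x ≥ f |y - x| + C * (y - x))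
    (hpos : ∀ x ≥ (0:ℝ), 0 ≤ f x)
    (n : ℕ) (x p : Fin n → ℝ)
    (hx : ∀ i, 0 ≤ x i) (hp : ∀ i, p i ∈ Set.Ioo (0:ℝ) 1) (hp1 : ∑ i, p i = 1) :
    ∑ i, p i * f (x i) - f (∑ j, p j * x j) ≥
      2 * ∑ i, p i * f (|x i - ∑ j, p j * x j| / 2) := by
  obtain ⟨m, hm_def⟩ : ∃ m, ∑ j, p j * x j = m := ⟨_, rfl⟩
  rw [hm_def]
  have hm : 0 ≤ m := hm_def ▸ Finset.sum_nonneg fun i _ => mul_nonneg (hp i).1.le (hx i)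
  -- f 0 = 0
  have hf0 : f 0 = 0 := by
    obtain ⟨C, hC⟩ := hf 0 le_rfl
    have h := hC 0 le_rfl
    simp at h
    exact le_antisymm h (hpos 0 le_rfl)
  -- doubling lemma: f y ≥ 2 f (y/2) for y ≥ 0
  have double : ∀ y : ℝ, 0 ≤ y → 2 * f (y / 2) ≤ f y := by
    intro y hy
    have hy2 : (0:ℝ) ≤ y / 2 := by linarith
    obtain ⟨C, hC⟩ := hf (y / 2) hy2
    have h1 := hC y hy
    have h2 := hC 0 le_rfl
    rw [show |y - y / 2| = y / 2 by rw [abs_of_nonneg]; ring; linarith] at h1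
    rw [show |0 - y / 2| = y / 2 by rw [abs_of_nonpos]; ring; linarith] at h2
    have hp2 := hpos (y / 2) hy2
    linarith
  obtain ⟨C, hC⟩ := hf m hm
  have key : ∀ i ∈ Finset.univ, p i * (2 * f (|x i - m| / 2)) ≤
      p i * (f (x i) - f m - C * (x i - m)) := by
    intro i _
    apply mul_le_mul_of_nonneg_left _ (hp i).1.le
    have h := hC (x i) (hx i)
    have hd := double |x i - m| (abs_nonneg _)
    linarith
  have hsum := Finset.sum_le_sum key
  have e1 : ∑ i, p i * (2 * f (|x i - m| / 2)) = 2 * ∑ i, p i * f (|x i - m| / 2) := by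
    rw [Finset.mul_sum]; congr 1; ext i; ring
  have e2 : ∑ i, p i * (f (x i) - f m - C * (x i - m)) =
      ∑ i, p i * f (x i) - f m * ∑ i, p i - ∑ i, p i * (C * (x i - m)) := by
    rw [Finset.mul_sum, ← Finset.sum_sub_distrib, ← Finset.sum_sub_distrib]
    exact Finset.sum_congr rfl fun i _ => by ring
  have e3 : ∑ i, p i * (C * (x i - m)) = C * ((∑ i, p i * x i) - m * ∑ i, p i) := by
    rw [mul_sub, Finset.mul_sum, Finset.mul_sum, Finset.mul_sum, ← Finset.sum_sub_distrib]
    exact Finset.sum_congr rfl fun i _ => by ring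
  rw [hm_def, hp1, mul_one] at e3
  rw [e3, hp1] at e2
  rw [e1, e2] at hsum
  simp at hsum
  linarith
end

section
/- Let f be superquadratic on [0,∞), x_i ≥ 0, and p_i, r_i > 0 with ∑ p_i = ∑ r_i = 1. Set m = min_i (p_i/r_i). Then J(f,p,x) - m·J(f,r,x) ≥ m·f(|∑_i (r_i - p_i)x_i|) + ∑_i (p_i - m·r_i) f(|x_i - ∑_j p_j x_j|), where J(f,p,x) = ∑ p_i f(x_i) - f(∑ p_i x_i). -/
theorem jensen_diff_lower_bound_min (f : ℝ → ℝ)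
    (hf : ∀ x ≥ (0:ℝ), ∃ C : ℝ, ∀ y ≥ (0:ℝ), f y - f x ≥ f |y - x| + C * (y - x))
    (ι : Type*) [Fintype ι] [Nonempty ι] (x p r : ι → ℝ)
    (hx : ∀ i, 0 ≤ x i) (hp : ∀ i, 0 < p i) (hr : ∀ i, 0 < r i)
    (hp1 : ∑ i, p i = 1) (hr1 : ∑ i, r i = 1) :
    let m := Finset.univ.inf' Finset.univ_nonempty (fun i => p i / r i)
    (∑ i, p i * f (x i) - f (∑ i, p i * x i)) -
        m * (∑ i, r i * f (x i) - f (∑ i, r i * x i)) ≥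
      m * f |∑ i, (r i - p i) * x i| +
        ∑ i, (p i - m * r i) * f |x i - ∑ j, p j * x j| := by
  intro m
  set S := ∑ i, p i * x i with hS
  set T := ∑ i, r i * x i with hT
  have hS0 : 0 ≤ S := Finset.sum_nonneg fun i _ => mul_nonneg (hp i).le (hx i)
  have hT0 : 0 ≤ T := Finset.sum_nonneg fun i _ => mul_nonneg (hr i).le (hx i)
  obtain ⟨C, hC⟩ := hf S hS0
  have hm_le : ∀ i, m ≤ p i / r i := fun i => Finset.inf'_le _ (Finset.mem_univ i)
  have hm0 : 0 ≤ m :=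
    Finset.le_inf' _ _ fun i _ => (div_pos (hp i) (hr i)).le
  have hq : ∀ i, 0 ≤ p i - m * r i := fun i => by
    have := (le_div_iff₀ (hr i)).mp (hm_le i)
    linarith
  -- key inequality summed with weights q i = p i - m * r i
  have key1 : ∑ i, (p i - m * r i) * (f |x i - S| + C * (x i - S)) ≤
      ∑ i, (p i - m * r i) * (f (x i) - f S) := by
    apply Finset.sum_le_sum
    intro i _
    exact mul_le_mul_of_nonneg_left (hC (x i) (hx i)) (hq i)
  have key2 : m * (f |T - S| + C * (T - S)) ≤ m * (f T - f S) :=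
    mul_le_mul_of_nonneg_left (hC T hT0) hm0
  -- algebraic identities
  have id1 : ∑ i, (p i - m * r i) * (f (x i) - f S) =
      (∑ i, p i * f (x i)) - m * (∑ i, r i * f (x i)) - (1 - m) * f S := by
    have h : ∀ i, (p i - m * r i) * (f (x i) - f S) =
        p i * f (x i) - m * (r i * f (x i)) - (p i - m * r i) * f S := fun i => by ring
    rw [Finset.sum_congr rfl fun i _ => h i, Finset.sum_sub_distrib, Finset.sum_sub_distrib,
      ← Finset.mul_sum, ← Finset.sum_mul, Finset.sum_sub_distrib, ← Finset.mul_sum, hp1, hr1]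
    ring
  have id2 : ∑ i, (p i - m * r i) * (f |x i - S| + C * (x i - S)) =
      (∑ i, (p i - m * r i) * f |x i - S|) + C * (m * (S - T)) := by
    have h : ∀ i, (p i - m * r i) * (f |x i - S| + C * (x i - S)) =
        (p i - m * r i) * f |x i - S| +
          (C * (p i * x i) - C * (m * (r i * x i)) - (p i - m * r i) * (C * S)) :=
      fun i => by ring
    rw [Finset.sum_congr rfl fun i _ => h i, Finset.sum_add_distrib, Finset.sum_sub_distrib,
      Finset.sum_sub_distrib, ← Finset.mul_sum, ← Finset.mul_sum, ← Finset.mul_sum,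
      ← Finset.sum_mul, Finset.sum_sub_distrib, ← Finset.mul_sum, hp1, hr1, ← hS, ← hT]
    ring
  have hTS : ∑ i, (r i - p i) * x i = T - S := by
    rw [hT, hS, ← Finset.sum_sub_distrib]
    apply Finset.sum_congr rfl
    intro i _; ring
  rw [hTS]
  have e1 : m * (f T - f S) = m * f T - m * f S := by ring
  have e2 : m * (f |T - S| + C * (T - S)) = m * f |T - S| + C * (m * (T - S)) := by ring
  have e3 : C * (m * (S - T)) + C * (m * (T - S)) = 0 := by ring
  rw [id1, id2] at key1
  linarith [key1, key2, e1, e2, e3]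
end

section
/- Let f be superquadratic on [0,∞), x_i ≥ 0, and p_i, r_i > 0 with ∑ p_i = ∑ r_i = 1. Set M = max_i (p_i/r_i). Then M·J(f,r,x) - J(f,p,x) ≥ f(|∑_i (r_i - p_i)x_i|) + ∑_i (M·r_i - p_i) f(|x_i - ∑_j r_j x_j|), where J(f,p,x) = ∑ p_i f(x_i) - f(∑ p_i x_i). -/
theorem jensen_diff_upper_bound_max (f : ℝ → ℝ)
    (hf : ∀ x ≥ (0:ℝ), ∃ C : ℝ, ∀ y ≥ (0:ℝ), f y - f x ≥ f |y - x| + C * (y - x))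
    (ι : Type*) [Fintype ι] [Nonempty ι] (x p r : ι → ℝ)
    (hx : ∀ i, 0 ≤ x i) (hp : ∀ i, 0 < p i) (hr : ∀ i, 0 < r i)
    (hp1 : ∑ i, p i = 1) (hr1 : ∑ i, r i = 1) :
    let M := Finset.univ.sup' Finset.univ_nonempty (fun i => p i / r i)
    M * (∑ i, r i * f (x i) - f (∑ i, r i * x i)) -
        (∑ i, p i * f (x i) - f (∑ i, p i * x i)) ≥
      f |∑ i, (r i - p i) * x i| +
        ∑ i, (M * r i - p i) * f |x i - ∑ j, r j * x j| := by
  intro M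
  set xb := ∑ j, r j * x j with hxbd
  set xp := ∑ i, p i * x i with hxpd
  have hxb : (0:ℝ) ≤ xb := Finset.sum_nonneg fun i _ => mul_nonneg (hr i).le (hx i)
  have hxp : (0:ℝ) ≤ xp := Finset.sum_nonneg fun i _ => mul_nonneg (hp i).le (hx i)
  obtain ⟨C, hC⟩ := hf xb hxb
  have hw : ∀ i, p i ≤ M * r i := by
    intro i
    have h1 : p i / r i ≤ M := Finset.le_sup' (fun i => p i / r i) (Finset.mem_univ i)
    calc p i = (p i / r i) * r i := (div_mul_cancel₀ _ (hr i).ne').symm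
      _ ≤ M * r i := mul_le_mul_of_nonneg_right h1 (hr i).le
  have key : ∀ i ∈ Finset.univ,
      (M * r i - p i) * (f |x i - xb| + C * (x i - xb)) ≤
      (M * r i - p i) * (f (x i) - f xb) :=
    fun i _ => mul_le_mul_of_nonneg_left (hC (x i) (hx i)) (by linarith [hw i])
  have hS := Finset.sum_le_sum key
  have h2 := hC xp hxp
  have comb : ∀ g : ι → ℝ,
      ∑ i, (M * r i - p i) * g i = M * (∑ i, r i * g i) - ∑ i, p i * g i := by
    intro g
    rw [Finset.mul_sum, ← Finset.sum_sub_distrib]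
    congr 1; ext i; ring
  have hsumr : ∀ g : ι → ℝ, ∀ c : ℝ, ∑ i, r i * (g i - c) = (∑ i, r i * g i) - c := by
    intro g c
    simp only [mul_sub, Finset.sum_sub_distrib, ← Finset.sum_mul, hr1, one_mul]
  have hsump : ∀ g : ι → ℝ, ∀ c : ℝ, ∑ i, p i * (g i - c) = (∑ i, p i * g i) - c := by
    intro g c
    simp only [mul_sub, Finset.sum_sub_distrib, ← Finset.sum_mul, hp1, one_mul]
  have E1 : ∑ i, (M * r i - p i) * (f (x i) - f xb) =
      M * ((∑ i, r i * f (x i)) - f xb) - ((∑ i, p i * f (x i)) - f xb) := by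
    rw [comb (fun i => f (x i) - f xb), hsumr (fun i => f (x i)) (f xb),
      hsump (fun i => f (x i)) (f xb)]
  have E2 : ∑ i, (M * r i - p i) * (f |x i - xb| + C * (x i - xb)) =
      (∑ i, (M * r i - p i) * f |x i - xb|) + C * (xb - xp) := by
    simp only [mul_add, Finset.sum_add_distrib]
    congr 1
    have : ∑ i, (M * r i - p i) * (C * (x i - xb)) =
        C * ∑ i, (M * r i - p i) * (x i - xb) := by
      rw [Finset.mul_sum]; congr 1; ext i; ring
    rw [this, comb (fun i => x i - xb), hsumr x xb, hsump x xb, ← hxbd, ← hxpd]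
    ring
  have E3 : ∑ i, (r i - p i) * x i = xb - xp := by
    simp only [sub_mul, Finset.sum_sub_distrib, ← hxbd, ← hxpd]
  rw [E3, abs_sub_comm]
  rw [E1, E2] at hS
  linarith [hS, h2]
end

section
/- Let f be superquadratic on [0,∞), x_i ≥ 0 with p_i > 0, ∑_{i=1}^n p_i = 1, and q_j > 0 with ∑_{j=1}^k q_j = 1. Then ∑_{i_1,...,i_k=1}^n p_{i_1}···p_{i_k} f(∑_{j=1}^k q_j x_{i_j}) - f(∑_{i=1}^n p_i x_i) ≥ ∑_{i_1,...,i_k=1}^n p_{i_1}···p_{i_k} f(|∑_{j=1}^k q_j x_{i_j} - ∑_{j=1}^n p_j x_j|). -/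
theorem jensen_k_superquadratic (f : ℝ → ℝ)
    (hf : ∀ x ≥ (0:ℝ), ∃ C : ℝ, ∀ y ≥ (0:ℝ), f y - f x ≥ f |y - x| + C * (y - x))
    (n k : ℕ) (x p : Fin n → ℝ) (q : Fin k → ℝ)
    (hx : ∀ i, 0 ≤ x i) (hp : ∀ i, 0 < p i) (hp1 : ∑ i, p i = 1)
    (hq : ∀ j, 0 < q j) (hq1 : ∑ j, q j = 1) :
    (∑ t : Fin k → Fin n, (∏ j, p (t j)) * f (∑ j, q j * x (t j))) -
        f (∑ i, p i * x i) ≥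
      ∑ t : Fin k → Fin n, (∏ j, p (t j)) *
        f |(∑ j, q j * x (t j)) - ∑ i, p i * x i| := by
  set m : ℝ := ∑ i, p i * x i with hm
  have hm0 : (0:ℝ) ≤ m := Finset.sum_nonneg fun i _ => mul_nonneg (hp i).le (hx i)
  obtain ⟨C, hC⟩ := hf m hm0
  have hw0 : ∀ t : Fin k → Fin n, (0:ℝ) ≤ ∏ j, p (t j) :=
    fun t => Finset.prod_nonneg fun j _ => (hp (t j)).le
  have hy0 : ∀ t : Fin k → Fin n, (0:ℝ) ≤ ∑ j, q j * x (t j) :=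
    fun t => Finset.sum_nonneg fun j _ => mul_nonneg (hq j).le (hx (t j))
  have hws : ∑ t : Fin k → Fin n, ∏ j, p (t j) = 1 := by
    rw [← Fintype.piFinset_univ, ← Finset.prod_univ_sum]
    simp [hp1]
  have hkey : ∀ j : Fin k, ∑ t : Fin k → Fin n, (∏ j', p (t j')) * x (t j) = m := by
    intro j
    have step : ∀ t : Fin k → Fin n, (∏ j', p (t j')) * x (t j) =
        ∏ j' : Fin k, (p (t j') * if j' = j then x (t j') else 1) := by
      intro t
      rw [Finset.prod_mul_distrib]
      congr 1
      rw [Finset.prod_ite_eq' Finset.univ j (fun j' => x (t j'))]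
      simp
    have hps : ∏ j' : Fin k, ∑ i : Fin n, (p i * if j' = j then x i else 1) =
        ∑ t : Fin k → Fin n, ∏ j' : Fin k, (p (t j') * if j' = j then x (t j') else 1) := by
      rw [Finset.prod_univ_sum (fun _ : Fin k => (Finset.univ : Finset (Fin n)))
        (fun j' i => p i * if j' = j then x i else 1), Fintype.piFinset_univ]
    calc ∑ t : Fin k → Fin n, (∏ j', p (t j')) * x (t j)
        = ∑ t : Fin k → Fin n, ∏ j' : Fin k, (p (t j') * if j' = j then x (t j') else 1) :=
          Finset.sum_congr rfl fun t _ => step t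
      _ = ∏ j' : Fin k, ∑ i : Fin n, (p i * if j' = j then x i else 1) := hps.symm
      _ = ∏ j' : Fin k, if j' = j then m else 1 := by
          refine Finset.prod_congr rfl fun j' _ => ?_
          by_cases h : j' = j <;> simp [h, hp1, hm]
      _ = m := by simp
  have hmean : ∑ t : Fin k → Fin n, (∏ j', p (t j')) * ∑ j, q j * x (t j) = m := by
    calc ∑ t : Fin k → Fin n, (∏ j', p (t j')) * ∑ j, q j * x (t j)
        = ∑ t : Fin k → Fin n, ∑ j, q j * ((∏ j', p (t j')) * x (t j)) := by
          refine Finset.sum_congr rfl fun t _ => ?_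
          rw [Finset.mul_sum]
          exact Finset.sum_congr rfl fun j _ => by ring
      _ = ∑ j, q j * ∑ t : Fin k → Fin n, (∏ j', p (t j')) * x (t j) := by
          rw [Finset.sum_comm]
          exact Finset.sum_congr rfl fun j _ => (Finset.mul_sum _ _ _).symm
      _ = m := by simp [hkey, ← Finset.sum_mul, hq1]
  have h2 : ∑ t : Fin k → Fin n, (∏ j', p (t j')) * (f (∑ j, q j * x (t j)) - f m) ≥
      ∑ t : Fin k → Fin n, (∏ j', p (t j')) *
        (f |(∑ j, q j * x (t j)) - m| + C * ((∑ j, q j * x (t j)) - m)) :=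
    Finset.sum_le_sum fun t _ =>
      mul_le_mul_of_nonneg_left (hC _ (hy0 t)) (hw0 t)
  have e1 : ∑ t : Fin k → Fin n, (∏ j', p (t j')) * (f (∑ j, q j * x (t j)) - f m) =
      (∑ t : Fin k → Fin n, (∏ j', p (t j')) * f (∑ j, q j * x (t j))) - f m := by
    simp only [mul_sub, Finset.sum_sub_distrib, ← Finset.sum_mul, hws, one_mul]
  have e2 : ∑ t : Fin k → Fin n, (∏ j', p (t j')) *
      (f |(∑ j, q j * x (t j)) - m| + C * ((∑ j, q j * x (t j)) - m)) =
      ∑ t : Fin k → Fin n, (∏ j', p (t j')) * f |(∑ j, q j * x (t j)) - m| := by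
    simp only [mul_add, Finset.sum_add_distrib]
    have : ∑ t : Fin k → Fin n, (∏ j', p (t j')) * (C * ((∑ j, q j * x (t j)) - m)) = 0 := by
      have expand : ∀ t : Fin k → Fin n, (∏ j', p (t j')) * (C * ((∑ j, q j * x (t j)) - m)) =
          C * ((∏ j', p (t j')) * ∑ j, q j * x (t j)) - C * ((∏ j', p (t j')) * m) := by
        intro t; ring
      rw [Finset.sum_congr rfl fun t _ => expand t, Finset.sum_sub_distrib,
        ← Finset.mul_sum, hmean]
      have : ∑ t : Fin k → Fin n, C * ((∏ j', p (t j')) * m) = C * m := by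
        rw [← Finset.mul_sum, ← Finset.sum_mul, hws, one_mul]
      rw [this]
      ring
    rw [this, add_zero]
  linarith [h2, e1.symm ▸ e2.symm ▸ h2]
end

section
/- With the setup of the generalized Jensen functional J_k(f, p_1,...,p_k, q, x_1,...,x_k) = ∑_{j_1,...,j_k} p_{1j_1}···p_{kj_k} f(∑_i q_i x_{i j_i}) - f(x̄), where x̄ = ∑_i q_i ∑_j p_{ij}x_{ij}, let r_{ij} > 0 with ∑_j r_{ij} = 1 for each i, and m = min_{j_1,...,j_k} (p_{1j_1}···p_{kj_k})/(r_{1j_1}···r_{kj_k}). If f is superquadratic on [0,∞) and all x_{ij} ≥ 0, then J_k(f,p,q,x) - m·J_k(f,r,q,x) ≥ m·f(|∑_i q_i ∑_j (r_{ij}-p_{ij})x_{ij}|) + ∑_{j_1,...,j_k}(p_{1j_1}···p_{kj_k} - m·r_{1j_1}···r_{kj_k}) f(|∑_i q_i x_{i j_i} - x̄|). -/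
open Finset

lemma marginal_aux {k : ℕ} (ι : Fin k → Type*) [∀ i, Fintype (ι i)]
    (p : (i : Fin k) → ι i → ℝ) (hp1 : ∀ i, ∑ j, p i j = 1)
    (i : Fin k) (y : ι i → ℝ) :
    ∑ t : (l : Fin k) → ι l, (∏ l, p l (t l)) * y (t i) = ∑ j, p i j * y j := by
  classical
  have hup : ∀ t : (l : Fin k) → ι l,
      (∏ l, p l (t l)) * y (t i)
        = ∏ l, Function.update p i (fun j => p i j * y j) l (t l) := by
    intro t
    rw [← Finset.mul_prod_erase Finset.univ
        (fun l => Function.update p i (fun j => p i j * y j) l (t l)) (Finset.mem_univ i),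
        ← Finset.mul_prod_erase Finset.univ (fun l => p l (t l)) (Finset.mem_univ i)]
    have h2 : ∏ l ∈ Finset.univ.erase i,
        Function.update p i (fun j => p i j * y j) l (t l)
        = ∏ l ∈ Finset.univ.erase i, p l (t l) := by
      refine Finset.prod_congr rfl fun l hl => ?_
      rw [Function.update_of_ne (Finset.ne_of_mem_erase hl)]
    rw [h2, Function.update_self]
    ring
  rw [Finset.sum_congr rfl fun t _ => hup t, ← Fintype.piFinset_univ,
      ← Finset.prod_univ_sum]
  rw [← Finset.mul_prod_erase Finset.univ
      (fun l => ∑ j, Function.update p i (fun j => p i j * y j) l j) (Finset.mem_univ i)]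
  have h1 : ∑ j, Function.update p i (fun j => p i j * y j) i j = ∑ j, p i j * y j := by
    rw [Function.update_self]
  have h2 : ∏ l ∈ Finset.univ.erase i,
      ∑ j, Function.update p i (fun j => p i j * y j) l j = 1 := by
    refine Finset.prod_eq_one fun l hl => ?_
    rw [Function.update_of_ne (Finset.ne_of_mem_erase hl)]
    exact hp1 l
  rw [h1, h2, mul_one]

theorem generalized_jensen_diff_min (f : ℝ → ℝ)
    (hf : ∀ x ≥ (0:ℝ), ∃ C : ℝ, ∀ y ≥ (0:ℝ), f y - f x ≥ f |y - x| + C * (y - x))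
    (k : ℕ) (ι : Fin k → Type*) [∀ i, Fintype (ι i)] [∀ i, Nonempty (ι i)]
    (x p r : (i : Fin k) → ι i → ℝ) (q : Fin k → ℝ)
    (hx : ∀ i j, 0 ≤ x i j) (hp : ∀ i j, 0 < p i j) (hr : ∀ i j, 0 < r i j)
    (hp1 : ∀ i, ∑ j, p i j = 1) (hr1 : ∀ i, ∑ j, r i j = 1)
    (hq : ∀ i, 0 < q i) (hq1 : ∑ i, q i = 1) :
    let xbar := ∑ i, q i * ∑ j, p i j * x i j
    let m := Finset.univ.inf' Finset.univ_nonempty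
      (fun t : (i : Fin k) → ι i => (∏ i, p i (t i)) / (∏ i, r i (t i)))
    ((∑ t : (i : Fin k) → ι i, (∏ i, p i (t i)) * f (∑ i, q i * x i (t i))) - f xbar) -
        m * ((∑ t : (i : Fin k) → ι i, (∏ i, r i (t i)) * f (∑ i, q i * x i (t i))) -
          f (∑ i, q i * ∑ j, r i j * x i j)) ≥
      m * f |∑ i, q i * ∑ j, (r i j - p i j) * x i j| +
        ∑ t : (i : Fin k) → ι i, ((∏ i, p i (t i)) - m * ∏ i, r i (t i)) *
          f |(∑ i, q i * x i (t i)) - xbar| := by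
  classical
  intro xbar m
  set ybar := ∑ i, q i * ∑ j, r i j * x i j with hybar
  have hxbar0 : 0 ≤ xbar :=
    Finset.sum_nonneg fun i _ => mul_nonneg (hq i).le
      (Finset.sum_nonneg fun j _ => mul_nonneg (hp i j).le (hx i j))
  have hybar0 : 0 ≤ ybar :=
    Finset.sum_nonneg fun i _ => mul_nonneg (hq i).le
      (Finset.sum_nonneg fun j _ => mul_nonneg (hr i j).le (hx i j))
  have hy0 : ∀ t : (i : Fin k) → ι i, 0 ≤ ∑ i, q i * x i (t i) := fun t =>
    Finset.sum_nonneg fun i _ => mul_nonneg (hq i).le (hx i (t i))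
  have hPsum : ∑ t : (i : Fin k) → ι i, ∏ i, p i (t i) = 1 := by
    rw [← Fintype.piFinset_univ, ← Finset.prod_univ_sum]
    simp [hp1]
  have hRsum : ∑ t : (i : Fin k) → ι i, ∏ i, r i (t i) = 1 := by
    rw [← Fintype.piFinset_univ, ← Finset.prod_univ_sum]
    simp [hr1]
  have hPy : ∑ t : (i : Fin k) → ι i, (∏ i, p i (t i)) * (∑ i, q i * x i (t i)) = xbar := by
    have e : ∀ t : (i : Fin k) → ι i,
        (∏ i, p i (t i)) * (∑ i, q i * x i (t i))
        = ∑ i, q i * ((∏ l, p l (t l)) * x i (t i)) := by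
      intro t
      rw [Finset.mul_sum]
      exact Finset.sum_congr rfl fun i _ => by ring
    rw [Finset.sum_congr rfl fun t _ => e t, Finset.sum_comm]
    refine Finset.sum_congr rfl fun i _ => ?_
    rw [← Finset.mul_sum, marginal_aux ι p hp1 i (x i)]
  have hRy : ∑ t : (i : Fin k) → ι i, (∏ i, r i (t i)) * (∑ i, q i * x i (t i)) = ybar := by
    have e : ∀ t : (i : Fin k) → ι i,
        (∏ i, r i (t i)) * (∑ i, q i * x i (t i))
        = ∑ i, q i * ((∏ l, r l (t l)) * x i (t i)) := by
      intro t
      rw [Finset.mul_sum]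
      exact Finset.sum_congr rfl fun i _ => by ring
    rw [Finset.sum_congr rfl fun t _ => e t, Finset.sum_comm]
    refine Finset.sum_congr rfl fun i _ => ?_
    rw [← Finset.mul_sum, marginal_aux ι r hr1 i (x i)]
  have hm0 : 0 ≤ m :=
    Finset.le_inf' _ _ fun t _ =>
      div_nonneg (Finset.prod_nonneg fun i _ => (hp i (t i)).le)
        (Finset.prod_nonneg fun i _ => (hr i (t i)).le)
  have hmR : ∀ t : (i : Fin k) → ι i, m * (∏ i, r i (t i)) ≤ ∏ i, p i (t i) := by
    intro t
    have h : m ≤ (∏ i, p i (t i)) / (∏ i, r i (t i)) :=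
      Finset.inf'_le _ (Finset.mem_univ t)
    have hR : (0:ℝ) < ∏ i, r i (t i) := Finset.prod_pos fun i _ => hr i (t i)
    exact (le_div_iff₀ hR).mp h
  have ha : ∀ t : (i : Fin k) → ι i, 0 ≤ (∏ i, p i (t i)) - m * ∏ i, r i (t i) :=
    fun t => sub_nonneg.2 (hmR t)
  have sA : ∑ t : (i : Fin k) → ι i, ((∏ i, p i (t i)) - m * ∏ i, r i (t i)) = 1 - m := by
    rw [Finset.sum_sub_distrib, hPsum, ← Finset.mul_sum, hRsum, mul_one]
  have sAy : ∑ t : (i : Fin k) → ι i,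
      ((∏ i, p i (t i)) - m * ∏ i, r i (t i)) * (∑ i, q i * x i (t i))
      = xbar - m * ybar := by
    calc ∑ t : (i : Fin k) → ι i,
        ((∏ i, p i (t i)) - m * ∏ i, r i (t i)) * (∑ i, q i * x i (t i))
        = ∑ t : (i : Fin k) → ι i,
          ((∏ i, p i (t i)) * (∑ i, q i * x i (t i))
            - m * ((∏ i, r i (t i)) * (∑ i, q i * x i (t i)))) :=
          Finset.sum_congr rfl fun t _ => by ring
      _ = xbar - m * ybar := by
          rw [Finset.sum_sub_distrib, ← Finset.mul_sum, hPy, hRy]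
  have hdiff : ybar - xbar = ∑ i, q i * ∑ j, (r i j - p i j) * x i j := by
    rw [← Finset.sum_sub_distrib]
    refine Finset.sum_congr rfl fun i _ => ?_
    rw [← mul_sub, ← Finset.sum_sub_distrib]
    congr 1
    exact Finset.sum_congr rfl fun j _ => (sub_mul _ _ _).symm
  rw [← hdiff]
  obtain ⟨C, hC⟩ := hf xbar hxbar0
  have h2 : m * (f |ybar - xbar| + C * (ybar - xbar)) ≤ m * (f ybar - f xbar) :=
    mul_le_mul_of_nonneg_left (hC ybar hybar0) hm0
  have h1 : ∑ t : (i : Fin k) → ι i,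
      ((∏ i, p i (t i)) - m * ∏ i, r i (t i)) *
        (f |(∑ i, q i * x i (t i)) - xbar| + C * ((∑ i, q i * x i (t i)) - xbar))
      ≤ ∑ t : (i : Fin k) → ι i,
        ((∏ i, p i (t i)) - m * ∏ i, r i (t i)) * (f (∑ i, q i * x i (t i)) - f xbar) :=
    Finset.sum_le_sum fun t _ =>
      mul_le_mul_of_nonneg_left (hC _ (hy0 t)) (ha t)
  have e1 : ∑ t : (i : Fin k) → ι i,
      ((∏ i, p i (t i)) - m * ∏ i, r i (t i)) * (f (∑ i, q i * x i (t i)) - f xbar)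
      = ((∑ t : (i : Fin k) → ι i, (∏ i, p i (t i)) * f (∑ i, q i * x i (t i)))
          - m * ∑ t : (i : Fin k) → ι i, (∏ i, r i (t i)) * f (∑ i, q i * x i (t i)))
        - (1 - m) * f xbar := by
    calc ∑ t : (i : Fin k) → ι i,
        ((∏ i, p i (t i)) - m * ∏ i, r i (t i)) * (f (∑ i, q i * x i (t i)) - f xbar)
        = ∑ t : (i : Fin k) → ι i,
          ((∏ i, p i (t i)) * f (∑ i, q i * x i (t i))
            - m * ((∏ i, r i (t i)) * f (∑ i, q i * x i (t i)))
            - f xbar * ((∏ i, p i (t i)) - m * ∏ i, r i (t i))) :=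
          Finset.sum_congr rfl fun t _ => by ring
      _ = _ := by
          rw [Finset.sum_sub_distrib, Finset.sum_sub_distrib, ← Finset.mul_sum,
            ← Finset.mul_sum, sA]
          ring
  have e2 : ∑ t : (i : Fin k) → ι i,
      ((∏ i, p i (t i)) - m * ∏ i, r i (t i)) *
        (f |(∑ i, q i * x i (t i)) - xbar| + C * ((∑ i, q i * x i (t i)) - xbar))
      = (∑ t : (i : Fin k) → ι i, ((∏ i, p i (t i)) - m * ∏ i, r i (t i)) *
          f |(∑ i, q i * x i (t i)) - xbar|)
        + C * (xbar - m * ybar) - C * xbar * (1 - m) := by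
    calc ∑ t : (i : Fin k) → ι i,
        ((∏ i, p i (t i)) - m * ∏ i, r i (t i)) *
          (f |(∑ i, q i * x i (t i)) - xbar| + C * ((∑ i, q i * x i (t i)) - xbar))
        = ∑ t : (i : Fin k) → ι i,
          (((∏ i, p i (t i)) - m * ∏ i, r i (t i)) * f |(∑ i, q i * x i (t i)) - xbar|
            + (C * (((∏ i, p i (t i)) - m * ∏ i, r i (t i)) * (∑ i, q i * x i (t i)))
              - C * xbar * ((∏ i, p i (t i)) - m * ∏ i, r i (t i)))) :=
          Finset.sum_congr rfl fun t _ => by ring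
      _ = _ := by
          rw [Finset.sum_add_distrib, Finset.sum_sub_distrib, ← Finset.mul_sum,
            ← Finset.mul_sum, sA, sAy]
          ring
  rw [ge_iff_le]
  linarith [h1, h2, e1, e2]
end

section
/- With the generalized Jensen functional notation, let M = max_{j_1,...,j_k} (p_{1j_1}···p_{kj_k})/(r_{1j_1}···r_{kj_k}). If f is superquadratic on [0,∞), then M·J_k(f,r,q,x) - J_k(f,p,q,x) ≥ f(|∑_i q_i ∑_j (r_{ij}-p_{ij})x_{ij}|) + ∑_{j_1,...,j_k}(M·r_{1j_1}···r_{kj_k} - p_{1j_1}···p_{kj_k}) f(|∑_i q_i x_{i j_i} - x̄_r|), where x̄_r = ∑_i q_i ∑_j r_{ij}x_{ij} and J_k(f,p,q,x) = ∑_{j_1,...,j_k} p_{1j_1}···p_{kj_k} f(∑_i q_i x_{i j_i}) - f(∑_i q_i ∑_j p_{ij}x_{ij}). -/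
lemma pi_marginal {k : ℕ} {ι : Fin k → Type*} [∀ i, Fintype (ι i)]
    (w : (i : Fin k) → ι i → ℝ) (hw : ∀ i, ∑ j, w i j = 1) (i : Fin k) (h : ι i → ℝ) :
    ∑ t : (l : Fin k) → ι l, (∏ l, w l (t l)) * h (t i) = ∑ j, w i j * h j := by
  classical
  set g : (l : Fin k) → ι l → ℝ := Function.update w i (fun j => w i j * h j) with hgdef
  have hg : ∀ t : (l : Fin k) → ι l, ∏ l, g l (t l) = (∏ l, w l (t l)) * h (t i) := by
    intro t
    rw [← Finset.mul_prod_erase Finset.univ _ (Finset.mem_univ i),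
        ← Finset.mul_prod_erase Finset.univ (fun l => w l (t l)) (Finset.mem_univ i)]
    have h1 : g i (t i) = w i (t i) * h (t i) := by
      simp [hgdef]
    have h2 : ∏ l ∈ Finset.univ.erase i, g l (t l) = ∏ l ∈ Finset.univ.erase i, w l (t l) :=
      Finset.prod_congr rfl (fun l hl => by
        simp [hgdef, Function.update_of_ne (Finset.ne_of_mem_erase hl)])
    rw [h1, h2]; ring
  calc ∑ t : (l : Fin k) → ι l, (∏ l, w l (t l)) * h (t i)
      = ∑ t : (l : Fin k) → ι l, ∏ l, g l (t l) := by
        exact (Finset.sum_congr rfl fun t _ => (hg t)).symm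
    _ = ∏ l, ∑ j, g l j := by
        rw [Finset.prod_univ_sum]
        rw [Fintype.piFinset_univ]
    _ = ∑ j, w i j * h j := by
        rw [← Finset.mul_prod_erase Finset.univ _ (Finset.mem_univ i)]
        have h1 : ∑ j, g i j = ∑ j, w i j * h j := by simp [hgdef]
        have h2 : ∏ l ∈ Finset.univ.erase i, ∑ j, g l j = 1 := by
          apply Finset.prod_eq_one
          intro l hl
          have : g l = w l := Function.update_of_ne (Finset.ne_of_mem_erase hl) _ _
          rw [this, hw l]
        rw [h1, h2, mul_one]

lemma pi_total {k : ℕ} {ι : Fin k → Type*} [∀ i, Fintype (ι i)]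
    (w : (i : Fin k) → ι i → ℝ) (hw : ∀ i, ∑ j, w i j = 1) :
    ∑ t : (l : Fin k) → ι l, ∏ l, w l (t l) = 1 := by
  rw [← Fintype.piFinset_univ, ← Finset.prod_univ_sum]
  simp [hw]

theorem generalized_jensen_diff_max (f : ℝ → ℝ)
    (hf : ∀ x ≥ (0:ℝ), ∃ C : ℝ, ∀ y ≥ (0:ℝ), f y - f x ≥ f |y - x| + C * (y - x))
    (k : ℕ) (ι : Fin k → Type*) [∀ i, Fintype (ι i)] [∀ i, Nonempty (ι i)]
    (x p r : (i : Fin k) → ι i → ℝ) (q : Fin k → ℝ)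
    (hx : ∀ i j, 0 ≤ x i j) (hp : ∀ i j, 0 < p i j) (hr : ∀ i j, 0 < r i j)
    (hp1 : ∀ i, ∑ j, p i j = 1) (hr1 : ∀ i, ∑ j, r i j = 1)
    (hq : ∀ i, 0 < q i) (hq1 : ∑ i, q i = 1) :
    let xbarr := ∑ i, q i * ∑ j, r i j * x i j
    let M := Finset.univ.sup' Finset.univ_nonempty
      (fun t : (i : Fin k) → ι i => (∏ i, p i (t i)) / (∏ i, r i (t i)))
    M * ((∑ t : (i : Fin k) → ι i, (∏ i, r i (t i)) * f (∑ i, q i * x i (t i))) - f xbarr) -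
        ((∑ t : (i : Fin k) → ι i, (∏ i, p i (t i)) * f (∑ i, q i * x i (t i))) -
          f (∑ i, q i * ∑ j, p i j * x i j)) ≥
      f |∑ i, q i * ∑ j, (r i j - p i j) * x i j| +
        ∑ t : (i : Fin k) → ι i, (M * (∏ i, r i (t i)) - ∏ i, p i (t i)) *
          f |(∑ i, q i * x i (t i)) - xbarr| := by
  intro xbarr M
  set P : ((l : Fin k) → ι l) → ℝ := fun t => ∏ i, p i (t i) with hP
  set R : ((l : Fin k) → ι l) → ℝ := fun t => ∏ i, r i (t i) with hR
  set S : ((l : Fin k) → ι l) → ℝ := fun t => ∑ i, q i * x i (t i) with hS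
  set xbarp : ℝ := ∑ i, q i * ∑ j, p i j * x i j with hxbarp
  -- basic positivity
  have hPpos : ∀ t, 0 < P t := fun t => Finset.prod_pos fun i _ => hp i (t i)
  have hRpos : ∀ t, 0 < R t := fun t => Finset.prod_pos fun i _ => hr i (t i)
  have hSnn : ∀ t, 0 ≤ S t := fun t =>
    Finset.sum_nonneg fun i _ => mul_nonneg (hq i).le (hx i (t i))
  have hxbarrnn : 0 ≤ xbarr :=
    Finset.sum_nonneg fun i _ => mul_nonneg (hq i).le
      (Finset.sum_nonneg fun j _ => mul_nonneg (hr i j).le (hx i j))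
  have hxbarpnn : 0 ≤ xbarp :=
    Finset.sum_nonneg fun i _ => mul_nonneg (hq i).le
      (Finset.sum_nonneg fun j _ => mul_nonneg (hp i j).le (hx i j))
  -- M bounds
  have hMge : ∀ t, P t ≤ M * R t := by
    intro t
    have hle := Finset.le_sup'
      (fun t : (i : Fin k) → ι i => (∏ i, p i (t i)) / (∏ i, r i (t i))) (Finset.mem_univ t)
    change P t / R t ≤ M at hle
    rw [div_le_iff₀ (hRpos t)] at hle
    linarith
  have hwnn : ∀ t, 0 ≤ M * R t - P t := fun t => by linarith [hMge t]
  -- sum identities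
  have hsumP : ∑ t, P t = 1 := pi_total p hp1
  have hsumR : ∑ t, R t = 1 := pi_total r hr1
  have hswap : ∀ (w : (i : Fin k) → ι i → ℝ), (∀ i, ∑ j, w i j = 1) →
      ∑ t : (l : Fin k) → ι l, (∏ i, w i (t i)) * S t = ∑ i, q i * ∑ j, w i j * x i j := by
    intro w hw
    have : ∀ t : (l : Fin k) → ι l, (∏ i, w i (t i)) * S t
        = ∑ i, q i * ((∏ l, w l (t l)) * x i (t i)) := by
      intro t
      rw [hS, Finset.mul_sum]
      exact Finset.sum_congr rfl fun i _ => by ring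
    rw [Finset.sum_congr rfl fun t _ => this t, Finset.sum_comm]
    refine Finset.sum_congr rfl fun i _ => ?_
    rw [← Finset.mul_sum, pi_marginal w hw i (x i)]
  have hPS : ∑ t, P t * S t = xbarp := hswap p hp1
  have hRS : ∑ t, R t * S t = xbarr := hswap r hr1
  -- superquadraticity at xbarr
  obtain ⟨C, hC⟩ := hf xbarr hxbarrnn
  have key : 0 ≤ ∑ t, (M * R t - P t) *
      (f (S t) - f xbarr - (f |S t - xbarr| + C * (S t - xbarr))) := by
    refine Finset.sum_nonneg fun t _ => mul_nonneg (hwnn t) ?_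
    have := hC (S t) (hSnn t)
    linarith
  have hW : ∑ t, (M * R t - P t) = M - 1 := by
    rw [Finset.sum_sub_distrib, ← Finset.mul_sum, hsumR, hsumP, mul_one]
  have split : ∑ t, (M * R t - P t) *
        (f (S t) - f xbarr - (f |S t - xbarr| + C * (S t - xbarr)))
      = (∑ t, (M * R t - P t) * f (S t)) - (∑ t, (M * R t - P t) * f xbarr)
        - (∑ t, (M * R t - P t) * f |S t - xbarr|)
        - (∑ t, (M * R t - P t) * (C * (S t - xbarr))) := by
    simp only [← Finset.sum_sub_distrib]
    refine Finset.sum_congr rfl fun t _ => by ring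
  have hA : ∑ t, (M * R t - P t) * f (S t)
      = M * (∑ t, R t * f (S t)) - ∑ t, P t * f (S t) := by
    rw [Finset.mul_sum, ← Finset.sum_sub_distrib]
    exact Finset.sum_congr rfl fun t _ => by ring
  have hB : ∑ t, (M * R t - P t) * f xbarr = (M - 1) * f xbarr := by
    rw [← Finset.sum_mul, hW]
  have hD : ∑ t, (M * R t - P t) * (C * (S t - xbarr))
      = C * ((M * xbarr - xbarp) - (M - 1) * xbarr) := by
    have e : ∀ t, (M * R t - P t) * (C * (S t - xbarr))
        = C * (M * (R t * S t) - P t * S t) - C * ((M * R t - P t) * xbarr) :=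
      fun t => by ring
    rw [Finset.sum_congr rfl fun t _ => e t, Finset.sum_sub_distrib,
      ← Finset.mul_sum, ← Finset.mul_sum, ← Finset.sum_mul]
    rw [Finset.sum_sub_distrib, ← Finset.mul_sum, hRS, hPS, hW]
    ring
  rw [split, hA, hB, hD] at key
  have h2 := hC xbarp hxbarpnn
  have habs : |∑ i, q i * ∑ j, (r i j - p i j) * x i j| = |xbarp - xbarr| := by
    rw [abs_sub_comm]
    congr 1
    rw [hxbarp]
    simp only [xbarr]
    rw [← Finset.sum_sub_distrib]
    refine Finset.sum_congr rfl fun i _ => ?_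
    rw [← mul_sub, ← Finset.sum_sub_distrib]
    congr 1
    refine Finset.sum_congr rfl fun j _ => by ring
  rw [ge_iff_le, habs]
  linarith
end

section
/- Let f : [0,∞) → ℝ, let x_{ij} ≥ 0, p_{ij} > 0 with ∑_j p_{ij} = 1 for each i = 1,...,k, q_i > 0 with ∑ q_i = 1. If m̃ ≤ f(∑_i q_i x_{i j_i}) ≤ M̃ for all choices of indices, then |T_k| ≤ ((M̃ - m̃)/2)·∑_{j_1,...,j_k} p_{1j_1}···p_{kj_k} |∑_i q_i x_{i j_i} - x̄|, where T_k = ∑_{j_1,...,j_k} p_{1j_1}···p_{kj_k} (∑_i q_i(x_{i j_i} - ∑_j p_{ij}x_{ij})) f(∑_i q_i x_{i j_i}) and x̄ = ∑_i q_i ∑_j p_{ij}x_{ij}. -/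
/-!
The weights `∏ i, p i (t i)` form a product probability distribution on the index tuples `t`,
under which `S t = ∑ i, q i * x i (t i)` has mean `xbar`; the inner sum of `T_k` is `S t - xbar`.
Since `S - xbar` is centered, `f ∘ S` may be replaced by `f ∘ S - (Mt + mt) / 2` without
changing `T_k`, and that function is bounded by `(Mt - mt) / 2` in absolute value.
-/

open Finset

section ProductWeights

variable {κ : Type*} [Fintype κ] [DecidableEq κ] {ι : κ → Type*} [∀ i, Fintype (ι i)]
  {R : Type*} [CommSemiring R]

theorem Fintype.sum_prod_eq_one (p : ∀ i, ι i → R) (hp : ∀ i, ∑ j, p i j = 1) :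
    ∑ t : ∀ i, ι i, ∏ i, p i (t i) = 1 := by
  rw [← Fintype.prod_sum, Fintype.prod_eq_one _ hp]

theorem Fintype.sum_prod_mul_apply (p : ∀ i, ι i → R) (i₀ : κ) (hp : ∀ i ≠ i₀, ∑ j, p i j = 1)
    (g : ι i₀ → R) :
    ∑ t : ∀ i, ι i, (∏ i, p i (t i)) * g (t i₀) = ∑ j, p i₀ j * g j := by
  set F := Function.update p i₀ (fun j => p i₀ j * g j)
  have hF : ∀ t : ∀ i, ι i, ∏ i, F i (t i) = (∏ i, p i (t i)) * g (t i₀) := by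
    intro t
    rw [← mul_prod_erase univ _ (mem_univ i₀), ← mul_prod_erase univ _ (mem_univ i₀),
      mul_right_comm]
    simp only [F, Function.update_self]
    congr 1
    exact Finset.prod_congr rfl fun i hi => by rw [Function.update_of_ne (ne_of_mem_erase hi)]
  simp_rw [← hF, ← Fintype.prod_sum]
  rw [Fintype.prod_eq_single i₀ fun i hi => by simp [F, Function.update_of_ne hi, hp i hi]]
  simp [F]

theorem Fintype.sum_prod_mul_sum_apply (p g : ∀ i, ι i → R) (hp : ∀ i, ∑ j, p i j = 1) :
    ∑ t : ∀ i, ι i, (∏ i, p i (t i)) * ∑ i, g i (t i) = ∑ i, ∑ j, p i j * g i j := by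
  simp_rw [mul_sum]
  rw [sum_comm]
  exact Finset.sum_congr rfl fun i _ => sum_prod_mul_apply p i (fun i _ => hp i) (g i)

end ProductWeights

theorem abs_sum_mul_le_of_sum_eq_zero {K α : Type*} [Field K] [LinearOrder K]
    [IsStrictOrderedRing K] (s : Finset α) (w g h : α → K) {m M : K} (hw : ∀ t ∈ s, 0 ≤ w t)
    (hg : ∑ t ∈ s, w t * g t = 0) (hh : ∀ t ∈ s, m ≤ h t ∧ h t ≤ M) :
    |∑ t ∈ s, w t * (g t * h t)| ≤ (M - m) / 2 * ∑ t ∈ s, w t * |g t| := by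
  set c := (M + m) / 2 with hc
  have hcenter : ∑ t ∈ s, w t * (g t * h t) = ∑ t ∈ s, w t * (g t * (h t - c)) := by
    have hshift : ∑ t ∈ s, w t * (g t * (h t - c)) =
        ∑ t ∈ s, w t * (g t * h t) - c * ∑ t ∈ s, w t * g t := by
      rw [mul_sum, ← sum_sub_distrib]; exact sum_congr rfl fun t _ => by ring
    rw [hshift, hg, mul_zero, sub_zero]
  rw [hcenter, mul_sum]
  refine (abs_sum_le_sum_abs _ _).trans (sum_le_sum fun t ht => ?_)
  have hdev : |h t - c| ≤ (M - m) / 2 := by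
    obtain ⟨hm, hM⟩ := hh t ht
    rw [abs_le]; constructor <;> linarith [hc]
  rw [abs_mul, abs_mul, abs_of_nonneg (hw t ht)]
  calc w t * (|g t| * |h t - c|) ≤ w t * (|g t| * ((M - m) / 2)) := by gcongr; exact hw t ht
    _ = (M - m) / 2 * (w t * |g t|) := by ring

theorem chebychev_functional_bound_general (f : ℝ → ℝ)
    (k : ℕ) (ι : Fin k → Type*) [∀ i, Fintype (ι i)]
    (x p : (i : Fin k) → ι i → ℝ) (q : Fin k → ℝ)
    (hp : ∀ i j, 0 < p i j)
    (hp1 : ∀ i, ∑ j, p i j = 1)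
    (mt Mt : ℝ)
    (hbound : ∀ t : (i : Fin k) → ι i,
      mt ≤ f (∑ i, q i * x i (t i)) ∧ f (∑ i, q i * x i (t i)) ≤ Mt) :
    let xbar := ∑ i, q i * ∑ j, p i j * x i j
    |∑ t : (i : Fin k) → ι i, (∏ i, p i (t i)) *
        ((∑ i, q i * (x i (t i) - ∑ j, p i j * x i j)) * f (∑ i, q i * x i (t i)))| ≤
      (Mt - mt) / 2 *
        ∑ t : (i : Fin k) → ι i, (∏ i, p i (t i)) * |(∑ i, q i * x i (t i)) - xbar| := by
  intro xbar
  have hmean : ∑ t : ∀ i, ι i, (∏ i, p i (t i)) * ∑ i, q i * x i (t i) = xbar := by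
    rw [Fintype.sum_prod_mul_sum_apply p (fun i j => q i * x i j) hp1]
    simp_rw [xbar, mul_sum, mul_left_comm]
  have hcentered :
      ∑ t : ∀ i, ι i, (∏ i, p i (t i)) * ((∑ i, q i * x i (t i)) - xbar) = 0 := by
    simp_rw [mul_sub, sum_sub_distrib, hmean, ← sum_mul, Fintype.sum_prod_eq_one p hp1, one_mul,
      sub_self]
  have hdeviation : ∀ t : ∀ i, ι i,
      ∑ i, q i * (x i (t i) - ∑ j, p i j * x i j) = (∑ i, q i * x i (t i)) - xbar := by
    intro t
    simp_rw [xbar, mul_sub, sum_sub_distrib]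
  simp_rw [hdeviation]
  exact abs_sum_mul_le_of_sum_eq_zero univ _ _ _
    (fun t _ => prod_nonneg fun i _ => (hp i (t i)).le) hcentered (fun t _ => hbound t)

theorem chebychev_functional_bound (f : ℝ → ℝ)
    (k : ℕ) (ι : Fin k → Type*) [∀ i, Fintype (ι i)]
    (x p : (i : Fin k) → ι i → ℝ) (q : Fin k → ℝ)
    (hx : ∀ i j, 0 ≤ x i j) (hp : ∀ i j, 0 < p i j)
    (hp1 : ∀ i, ∑ j, p i j = 1)
    (hq : ∀ i, 0 < q i) (hq1 : ∑ i, q i = 1)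
    (mt Mt : ℝ)
    (hbound : ∀ t : (i : Fin k) → ι i,
      mt ≤ f (∑ i, q i * x i (t i)) ∧ f (∑ i, q i * x i (t i)) ≤ Mt) :
    let xbar := ∑ i, q i * ∑ j, p i j * x i j
    |∑ t : (i : Fin k) → ι i, (∏ i, p i (t i)) *
        ((∑ i, q i * (x i (t i) - ∑ j, p i j * x i j)) * f (∑ i, q i * x i (t i)))| ≤
      (Mt - mt) / 2 *
        ∑ t : (i : Fin k) → ι i, (∏ i, p i (t i)) * |(∑ i, q i * x i (t i)) - xbar| :=
  chebychev_functional_bound_general f k ι x p q hp hp1 mt Mt hbound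
end

section
/- Let f : [0,∞) → ℝ be superquadratic with witness C, x_{ij} ≥ 0, p_{ij} > 0 with ∑_j p_{ij} = 1 for each i, q_i > 0 with ∑ q_i = 1, and x̄ = ∑_i q_i ∑_j p_{ij}x_{ij}. If m̃ ≤ C(∑_i q_i x_{i j_i}) ≤ M̃ for all index choices, then J_k ≤ ∑_{j_1,...,j_k} p_{1j_1}···p_{kj_k} ( ((M̃-m̃)/2)|∑_i q_i x_{i j_i} - x̄| - f(|∑_i q_i x_{i j_i} - x̄|) ), where J_k = ∑_{j_1,...,j_k} p_{1j_1}···p_{kj_k} f(∑_i q_i x_{i j_i}) - f(x̄). -/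
theorem jensen_upper_bound_via_chebychev (f C : ℝ → ℝ)
    (hf : ∀ x ≥ (0:ℝ), ∀ y ≥ (0:ℝ), f y - f x ≥ f |y - x| + C x * (y - x))
    (k : ℕ) (ι : Fin k → Type*) [∀ i, Fintype (ι i)]
    (x p : (i : Fin k) → ι i → ℝ) (q : Fin k → ℝ)
    (hx : ∀ i j, 0 ≤ x i j) (hp : ∀ i j, 0 < p i j)
    (hp1 : ∀ i, ∑ j, p i j = 1)
    (hq : ∀ i, 0 < q i) (hq1 : ∑ i, q i = 1)
    (mt Mt : ℝ)
    (hbound : ∀ t : (i : Fin k) → ι i,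
      mt ≤ C (∑ i, q i * x i (t i)) ∧ C (∑ i, q i * x i (t i)) ≤ Mt) :
    let xbar := ∑ i, q i * ∑ j, p i j * x i j
    (∑ t : (i : Fin k) → ι i, (∏ i, p i (t i)) * f (∑ i, q i * x i (t i))) - f xbar ≤
      ∑ t : (i : Fin k) → ι i, (∏ i, p i (t i)) *
        ((Mt - mt) / 2 * |(∑ i, q i * x i (t i)) - xbar| -
          f |(∑ i, q i * x i (t i)) - xbar|) := by
  intro xbar
  classical
  set P : ((i : Fin k) → ι i) → ℝ := fun t => ∏ i, p i (t i) with hP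
  set y : ((i : Fin k) → ι i) → ℝ := fun t => ∑ i, q i * x i (t i) with hy
  have hPpos : ∀ t, 0 ≤ P t := fun t => Finset.prod_nonneg (fun i _ => (hp i (t i)).le)
  have hA : ∑ t : (i : Fin k) → ι i, P t = 1 := by
    rw [← Fintype.prod_sum p]
    simp [hp1]
  have hxbar0 : 0 ≤ xbar := by
    apply Finset.sum_nonneg
    intro i _
    exact mul_nonneg (hq i).le (Finset.sum_nonneg fun j _ =>
      mul_nonneg (hp i j).le (hx i j))
  have hy0 : ∀ t, 0 ≤ y t := by
    intro t
    exact Finset.sum_nonneg fun i _ => mul_nonneg (hq i).le (hx i (t i))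
  -- key marginal computation
  have hmarg : ∀ i : Fin k, ∑ t : (i : Fin k) → ι i, P t * x i (t i)
      = ∑ j, p i j * x i j := by
    intro i
    set g : (i' : Fin k) → ι i' → ℝ :=
      Function.update p i (fun j => p i j * x i j) with hg
    have h1 : ∀ t : (i : Fin k) → ι i, P t * x i (t i) = ∏ i', g i' (t i') := by
      intro t
      show (∏ i', p i' (t i')) * x i (t i) = ∏ i', g i' (t i')
      rw [← Finset.prod_erase_mul _ _ (Finset.mem_univ i),
          ← Finset.prod_erase_mul _ _ (Finset.mem_univ i)]
      have e1 : ∀ i' ∈ Finset.univ.erase i, g i' (t i') = p i' (t i') := by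
        intro i' hi'
        rw [hg, Function.update_of_ne (Finset.mem_erase.1 hi').1]
      rw [Finset.prod_congr rfl e1, hg, Function.update_self]
      ring
    have h2 : ∏ i', ∑ j, g i' j = ∑ j, p i j * x i j := by
      rw [← Finset.prod_erase_mul _ _ (Finset.mem_univ i)]
      have e1 : ∀ i' ∈ Finset.univ.erase i, (∑ j, g i' j) = 1 := by
        intro i' hi'
        rw [hg, Function.update_of_ne (Finset.mem_erase.1 hi').1, hp1]
      rw [Finset.prod_congr rfl e1, hg, Function.update_self]
      simp
    calc ∑ t : (i : Fin k) → ι i, P t * x i (t i)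
        = ∑ t : (i : Fin k) → ι i, ∏ i', g i' (t i') :=
          Finset.sum_congr rfl fun t _ => h1 t
      _ = ∏ i', ∑ j, g i' j := (Fintype.prod_sum g).symm
      _ = ∑ j, p i j * x i j := h2
  have hB : ∑ t : (i : Fin k) → ι i, P t * y t = xbar := by
    calc ∑ t : (i : Fin k) → ι i, P t * y t
        = ∑ t : (i : Fin k) → ι i, ∑ i, q i * (P t * x i (t i)) := by
          apply Finset.sum_congr rfl
          intro t _
          rw [hy, Finset.mul_sum]
          exact Finset.sum_congr rfl fun i _ => by ring
      _ = ∑ i, q i * ∑ t : (i : Fin k) → ι i, P t * x i (t i) := by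
          rw [Finset.sum_comm]
          exact Finset.sum_congr rfl fun i _ => by rw [Finset.mul_sum]
      _ = xbar := Finset.sum_congr rfl fun i _ => by rw [hmarg i]
  have hD : ∑ t : (i : Fin k) → ι i, P t * (y t - xbar) = 0 := by
    have : ∑ t : (i : Fin k) → ι i, P t * (y t - xbar)
        = (∑ t : (i : Fin k) → ι i, P t * y t)
          - (∑ t : (i : Fin k) → ι i, P t) * xbar := by
      rw [Finset.sum_mul, ← Finset.sum_sub_distrib]
      exact Finset.sum_congr rfl fun t _ => by ring
    rw [this, hA, hB]; ring
  -- pointwise superquadratic bound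
  have key : ∀ t : (i : Fin k) → ι i,
      f (y t) - f xbar ≤ C (y t) * (y t - xbar) - f |y t - xbar| := by
    intro t
    have h := hf (y t) (hy0 t) xbar hxbar0
    rw [abs_sub_comm] at h
    linarith
  -- chebychev-type bound
  have cheb : ∀ t : (i : Fin k) → ι i,
      C (y t) * (y t - xbar) ≤ (Mt + mt) / 2 * (y t - xbar)
        + (Mt - mt) / 2 * |y t - xbar| := by
    intro t
    obtain ⟨h1, h2⟩ := hbound t
    have habs : |C (y t) - (Mt + mt) / 2| ≤ (Mt - mt) / 2 := by
      rw [abs_le]; constructor <;> linarith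
    have h3 : (C (y t) - (Mt + mt) / 2) * (y t - xbar)
        ≤ (Mt - mt) / 2 * |y t - xbar| := by
      calc (C (y t) - (Mt + mt) / 2) * (y t - xbar)
          ≤ |(C (y t) - (Mt + mt) / 2) * (y t - xbar)| := le_abs_self _
        _ = |C (y t) - (Mt + mt) / 2| * |y t - xbar| := abs_mul _ _
        _ ≤ (Mt - mt) / 2 * |y t - xbar| :=
            mul_le_mul_of_nonneg_right habs (abs_nonneg _)
    linarith
  -- put it together
  have step1 : (∑ t : (i : Fin k) → ι i, P t * f (y t)) - f xbar
      ≤ ∑ t : (i : Fin k) → ι i, P t * (C (y t) * (y t - xbar) - f |y t - xbar|) := by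
    have e2 : ∑ t : (i : Fin k) → ι i, P t * (f (y t) - f xbar)
        = (∑ t : (i : Fin k) → ι i, P t * f (y t))
          - (∑ t : (i : Fin k) → ι i, P t) * f xbar := by
      rw [Finset.sum_mul, ← Finset.sum_sub_distrib]
      exact Finset.sum_congr rfl fun t _ => by ring
    rw [hA, one_mul] at e2
    rw [← e2]
    exact Finset.sum_le_sum fun t _ =>
      mul_le_mul_of_nonneg_left (key t) (hPpos t)
  have step2 : ∑ t : (i : Fin k) → ι i, P t * (C (y t) * (y t - xbar) - f |y t - xbar|)
      ≤ ∑ t : (i : Fin k) → ι i, P t * ((Mt + mt) / 2 * (y t - xbar)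
          + ((Mt - mt) / 2 * |y t - xbar| - f |y t - xbar|)) := by
    apply Finset.sum_le_sum
    intro t _
    apply mul_le_mul_of_nonneg_left _ (hPpos t)
    have := cheb t
    linarith
  have step3 : ∑ t : (i : Fin k) → ι i, P t * ((Mt + mt) / 2 * (y t - xbar)
        + ((Mt - mt) / 2 * |y t - xbar| - f |y t - xbar|))
      = ∑ t : (i : Fin k) → ι i, P t *
          ((Mt - mt) / 2 * |y t - xbar| - f |y t - xbar|) := by
    have : ∑ t : (i : Fin k) → ι i, P t * ((Mt + mt) / 2 * (y t - xbar)
          + ((Mt - mt) / 2 * |y t - xbar| - f |y t - xbar|))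
        = (Mt + mt) / 2 * (∑ t : (i : Fin k) → ι i, P t * (y t - xbar))
          + ∑ t : (i : Fin k) → ι i, P t *
            ((Mt - mt) / 2 * |y t - xbar| - f |y t - xbar|) := by
      rw [Finset.mul_sum, ← Finset.sum_add_distrib]
      exact Finset.sum_congr rfl fun t _ => by ring
    rw [this, hD]; ring
  calc (∑ t : (i : Fin k) → ι i, P t * f (y t)) - f xbar
      ≤ _ := step1
    _ ≤ _ := step2
    _ = _ := step3
end

section
/- Let f be superquadratic on [0,∞) and p : [a,b] → (0,∞) with ∫_a^b p(x)dx = 1, where [a,b] ⊂ (0,∞). Then ∫_a^b f(x)p(x)dx ≥ f(∫_a^b x p(x)dx) + ∫_a^b f(|x - ∫_a^b t p(t)dt|) p(x)dx. -/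
open intervalIntegral in
theorem integral_jensen_superquadratic (f p : ℝ → ℝ) (a b : ℝ)
    (hf : ∀ x ≥ (0:ℝ), ∃ C : ℝ, ∀ y ≥ (0:ℝ), f y - f x ≥ f |y - x| + C * (y - x))
    (ha : 0 < a) (hab : a < b)
    (hppos : ∀ x ∈ Set.Icc a b, 0 < p x)
    (hp1 : ∫ x in a..b, p x = 1)
    (hint1 : IntervalIntegrable (fun x => f x * p x) MeasureTheory.volume a b)
    (hint2 : IntervalIntegrable (fun x => x * p x) MeasureTheory.volume a b)
    (hint3 : IntervalIntegrable
      (fun x => f |x - ∫ t in a..b, t * p t| * p x) MeasureTheory.volume a b) :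
    ∫ x in a..b, f x * p x ≥
      f (∫ x in a..b, x * p x) +
        ∫ x in a..b, f |x - ∫ t in a..b, t * p t| * p x := by
  set m : ℝ := ∫ t in a..b, t * p t with hm
  have hm0 : 0 ≤ m := by
    apply intervalIntegral.integral_nonneg hab.le
    intro x hx
    have hxa : 0 < x := lt_of_lt_of_le ha hx.1
    exact mul_nonneg hxa.le (hppos x hx).le
  obtain ⟨C, hC⟩ := hf m hm0
  -- p is interval integrable
  have hcont : ContinuousOn (fun x : ℝ => x⁻¹) (Set.uIcc a b) := by
    apply ContinuousOn.inv₀ continuousOn_id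
    intro x hx
    rw [Set.uIcc_of_le hab.le] at hx
    exact ne_of_gt (lt_of_lt_of_le ha hx.1)
  have hp_int : IntervalIntegrable p MeasureTheory.volume a b := by
    have h := hint2.mul_continuousOn hcont
    rw [intervalIntegrable_iff] at h ⊢
    apply h.congr_fun _ measurableSet_uIoc
    intro x hx
    rw [Set.uIoc_of_le hab.le] at hx
    have hx0 : x ≠ 0 := ne_of_gt (lt_trans ha hx.1)
    field_simp
  have h1 : IntervalIntegrable (fun x => f m * p x) MeasureTheory.volume a b :=
    hp_int.const_mul _
  have h3 : IntervalIntegrable (fun x => C * ((x - m) * p x)) MeasureTheory.volume a b := by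
    have := (hint2.sub (hp_int.const_mul m)).const_mul C
    simpa [sub_mul] using this
  have hRHS := (h1.add hint3).add h3
  have hpt : ∀ x ∈ Set.Icc a b,
      f m * p x + f |x - m| * p x + C * ((x - m) * p x) ≤ f x * p x := by
    intro x hx
    have hx0 : (0:ℝ) ≤ x := (lt_of_lt_of_le ha hx.1).le
    have hkey := hC x hx0
    have hpx := (hppos x hx).le
    nlinarith [mul_le_mul_of_nonneg_right hkey hpx]
  have key := intervalIntegral.integral_mono_on hab.le hRHS hint1 hpt
  rw [intervalIntegral.integral_add (h1.add hint3) h3,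
    intervalIntegral.integral_add h1 hint3,
    intervalIntegral.integral_const_mul, intervalIntegral.integral_const_mul, hp1] at key
  have hzero : (∫ x in a..b, (x - m) * p x) = 0 := by
    simp only [sub_mul]
    rw [intervalIntegral.integral_sub hint2 (hp_int.const_mul m),
      intervalIntegral.integral_const_mul, hp1]
    simp [hm]
  rw [hzero] at key
  linarith
end

section
/- Let f be superquadratic on [0,∞), [a,b] ⊂ (0,∞), k a positive integer, and q_1,...,q_k > 0 with ∑ q_i = 1. Then (1/(b-a)^k)∫_{[a,b]^k} f(∑_{i=1}^k q_i x_i) dx_1···dx_k - f((a+b)/2) ≥ (1/(b-a)^k)∫_{[a,b]^k} f(|∑_{i=1}^k q_i x_i - (a+b)/2|) dx_1···dx_k. -/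
/-!
Superquadraticity at the centre `m = (a + b) / 2` gives, for `y = ∑ qᵢ xᵢ ≥ 0`, the pointwise
bound `f y ≥ f m + f |y - m| + C (y - m)`. Integrating over the box `[a, b]ᵏ` kills the linear
term, because each coordinate, hence also the convex combination `∑ qᵢ xᵢ`, has mean `m` there.
-/

open MeasureTheory Set

def Superquadratic (f : ℝ → ℝ) : Prop :=
  ∀ x ≥ (0:ℝ), ∃ C : ℝ, ∀ y ≥ (0:ℝ), f y - f x ≥ f |y - x| + C * (y - x)

theorem Superquadratic.integral_jensen {α : Type*} [MeasurableSpace α] {μ : Measure α}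
    [IsFiniteMeasure μ] {f : ℝ → ℝ} (hf : Superquadratic f) {φ : α → ℝ} {m : ℝ} (hm : 0 ≤ m)
    (hφ_nonneg : ∀ᵐ x ∂μ, 0 ≤ φ x) (hφ : Integrable φ μ)
    (hφ_mean : ∫ x, φ x ∂μ = μ.real univ * m)
    (hfφ : Integrable (fun x => f (φ x)) μ) (hfφm : Integrable (fun x => f |φ x - m|) μ) :
    μ.real univ * f m + ∫ x, f |φ x - m| ∂μ ≤ ∫ x, f (φ x) ∂μ := by
  obtain ⟨C, hC⟩ := hf m hm
  have hlin : Integrable (fun x => C * (φ x - m)) μ := (hφ.sub (integrable_const m)).const_mul C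
  have hrem : Integrable (fun x => f |φ x - m| + C * (φ x - m)) μ := hfφm.add hlin
  have hlin_zero : ∫ x, C * (φ x - m) ∂μ = 0 := by
    rw [integral_const_mul, integral_sub hφ (integrable_const m), hφ_mean, integral_const,
      smul_eq_mul, sub_self, mul_zero]
  calc μ.real univ * f m + ∫ x, f |φ x - m| ∂μ
      = ∫ x, f m + (f |φ x - m| + C * (φ x - m)) ∂μ := by
        rw [integral_add (integrable_const _) hrem, integral_add hfφm hlin,
          hlin_zero, add_zero, integral_const, smul_eq_mul]
    _ ≤ ∫ x, f (φ x) ∂μ := by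
        refine integral_mono_ae ((integrable_const _).add hrem) hfφ ?_
        filter_upwards [hφ_nonneg] with x hx
        linarith [hC (φ x) hx]

theorem setIntegral_pi_Icc_apply {ι : Type*} [Fintype ι] {l u : ι → ℝ}
    (hlu : l ≤ u) (i : ι) :
    ∫ x in Icc l u, x i = (l i + u i) / 2 * ∏ j, (u j - l j) := by
  classical
  have hprod := integral_fintype_prod_eq_prod (μ := fun j => volume.restrict (Icc (l j) (u j)))
    (fun j (t : ℝ) => if j = i then t else 1)
  simp only [Finset.prod_ite_eq', Finset.mem_univ, if_true] at hprod
  rw [← pi_univ_Icc, volume_pi, Measure.restrict_pi_pi, hprod,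
    ← Finset.mul_prod_erase _ _ (Finset.mem_univ i),
    ← Finset.mul_prod_erase _ _ (Finset.mem_univ i), ← mul_assoc]
  simp only [↓reduceIte]
  congr 1
  · rw [integral_Icc_eq_integral_Ioc, ← intervalIntegral.integral_of_le (hlu i), integral_id]
    ring
  · refine Finset.prod_congr rfl fun j hj => ?_
    simp only [Finset.ne_of_mem_erase hj, ↓reduceIte]
    rw [integral_const, smul_eq_mul, mul_one,
      measureReal_restrict_apply_univ, Real.volume_real_Icc_of_le (hlu j)]

open MeasureTheory in
theorem integral_jensen_box_superquadratic_general (f : ℝ → ℝ) (a b : ℝ)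
    (hf : ∀ x ≥ (0:ℝ), ∃ C : ℝ, ∀ y ≥ (0:ℝ), f y - f x ≥ f |y - x| + C * (y - x))
    (ha : 0 < a) (hab : a < b)
    (k : ℕ) (q : Fin k → ℝ)
    (hq : ∀ i, 0 < q i) (hq1 : ∑ i, q i = 1)
    (hint1 : IntegrableOn (fun x : Fin k → ℝ => f (∑ i, q i * x i))
      (Set.Icc (fun _ => a) (fun _ => b)) volume)
    (hint2 : IntegrableOn (fun x : Fin k → ℝ => f |(∑ i, q i * x i) - (a + b) / 2|)
      (Set.Icc (fun _ => a) (fun _ => b)) volume) :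
    (1 / (b - a) ^ k) *
        (∫ x in Set.Icc (fun _ => a) (fun _ => b), f (∑ i, q i * x i)) -
      f ((a + b) / 2) ≥
    (1 / (b - a) ^ k) *
        ∫ x in Set.Icc (fun _ => a) (fun _ => b),
          f |(∑ i, q i * x i) - (a + b) / 2| := by
  set s := Icc (fun _ : Fin k => a) (fun _ => b)
  have hle : (fun _ : Fin k => a) ≤ fun _ => b := fun _ => hab.le
  have : IsFiniteMeasure (volume.restrict s) := isFiniteMeasure_restrict.2 measure_Icc_lt_top.ne
  have hvol : (volume.restrict s).real univ = (b - a) ^ k := by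
    simp [s, measureReal_def, Real.volume_Icc_pi_toReal hle]
  have hφ : IntegrableOn (fun x : Fin k → ℝ => ∑ i, q i * x i) s :=
    (by fun_prop : Continuous fun x : Fin k → ℝ => ∑ i, q i * x i).integrableOn_Icc
  have hφ_nonneg : ∀ x ∈ s, 0 ≤ ∑ i, q i * x i := fun x hx =>
    Finset.sum_nonneg fun i _ => mul_nonneg (hq i).le (ha.le.trans (hx.1 i))
  have hφ_mean : ∫ x in s, ∑ i, q i * x i = (volume.restrict s).real univ * ((a + b) / 2) := by
    rw [integral_finsetSum _ fun i _ =>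
      (by fun_prop : Continuous fun x : Fin k → ℝ => q i * x i).integrableOn_Icc]
    simp only [integral_const_mul, s, setIntegral_pi_Icc_apply hle, ← Finset.sum_mul, hq1, hvol,
      one_mul, Finset.prod_const, Finset.card_univ, Fintype.card_fin]
    exact mul_comm _ _
  have hjensen := Superquadratic.integral_jensen (μ := volume.restrict s) hf (by linarith)
    (ae_restrict_of_forall_mem measurableSet_Icc hφ_nonneg) hφ hφ_mean hint1 hint2
  rw [hvol] at hjensen
  have hV : 0 < (b - a) ^ k := pow_pos (sub_pos.2 hab) k
  have hscaled := mul_le_mul_of_nonneg_left hjensen (inv_nonneg.2 hV.le)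
  rw [mul_add, inv_mul_cancel_left₀ hV.ne'] at hscaled
  rw [one_div]
  linarith

open MeasureTheory in
theorem integral_jensen_box_superquadratic (f : ℝ → ℝ) (a b : ℝ)
    (hf : ∀ x ≥ (0:ℝ), ∃ C : ℝ, ∀ y ≥ (0:ℝ), f y - f x ≥ f |y - x| + C * (y - x))
    (ha : 0 < a) (hab : a < b)
    (k : ℕ) (hk : 0 < k) (q : Fin k → ℝ)
    (hq : ∀ i, 0 < q i) (hq1 : ∑ i, q i = 1)
    (hint1 : IntegrableOn (fun x : Fin k → ℝ => f (∑ i, q i * x i))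
      (Set.Icc (fun _ => a) (fun _ => b)) volume)
    (hint2 : IntegrableOn (fun x : Fin k → ℝ => f |(∑ i, q i * x i) - (a + b) / 2|)
      (Set.Icc (fun _ => a) (fun _ => b)) volume) :
    (1 / (b - a) ^ k) *
        (∫ x in Set.Icc (fun _ => a) (fun _ => b), f (∑ i, q i * x i)) -
      f ((a + b) / 2) ≥
    (1 / (b - a) ^ k) *
        ∫ x in Set.Icc (fun _ => a) (fun _ => b),
          f |(∑ i, q i * x i) - (a + b) / 2| :=
  integral_jensen_box_superquadratic_general f a b hf ha hab k q hq hq1 hint1 hint2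
end
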